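/- Verification of the commutator assumption for the periodic finite-difference discretization: in the finite-difference setting, there exist constants C1, C2 > 0 depending only on the suprema over [0,1] of |V'|, |V''|, |V'''|, |V''''| (and in particular independent of n) such that for every n ≥ 3 and every v ∈ ℂⁿ: ‖[H1,H2]v‖ ≤ C1(‖D1 v‖ + ‖v‖) and ‖[H1,[H1,H2]]v‖ ≤ C2(‖H1 v‖ + ‖v‖), where ‖·‖ is the Euclidean 2-norm on ℂⁿ. Moreover H1 = D1†·D1, so H1 is positive semidefinite. -/

import Mathlib

open Matrix

noncomputable section

/-- Square `n × n` complex matrices. -/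
abbrev Mat (n : ℕ) := Matrix (Fin n) (Fin n) ℂ

/-- The commutator `[A,B] = AB - BA`. -/
def matComm {n : ℕ} (A B : Mat n) : Mat n := A * B - B * A

/-- The Euclidean 2-norm of a vector in `ℂⁿ`. -/
noncomputable def evnorm {n : ℕ} (v : Fin n → ℂ) : ℝ :=
  ‖(WithLp.equiv 2 (Fin n → ℂ)).symm v‖

/-- The `n×n` periodic central finite-difference discretization of `-Δ` on `[0,1]`:
`(H1)_{kk} = 2n²`, `(H1)_{k,k+1 mod n} = (H1)_{k,k-1 mod n} = -n²`, all other entries `0`. -/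
noncomputable def fdH1 (n : ℕ) : Mat n :=
  Matrix.of fun k l : Fin n =>
    if (l : ℕ) = (k : ℕ) then 2 * (n : ℂ)^2
    else if (l : ℕ) = ((k : ℕ) + 1) % n ∨ (l : ℕ) = ((k : ℕ) + n - 1) % n then -(n : ℂ)^2
    else 0

/-- The diagonal potential matrix `H2 = diag(V(0), V(1/n), …, V((n-1)/n))`. -/
noncomputable def fdH2 (n : ℕ) (V : ℝ → ℝ) : Mat n :=
  Matrix.diagonal fun k : Fin n => ((V (((k : ℕ) : ℝ) / (n : ℝ))) : ℂ)

/-- The difference matrix: `(D1)_{kk} = -n`, `(D1)_{k,k-1 mod n} = n`, all other entries `0`. -/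
noncomputable def fdD1 (n : ℕ) : Mat n :=
  Matrix.of fun k l : Fin n =>
    if (l : ℕ) = (k : ℕ) then -(n : ℂ)
    else if (l : ℕ) = ((k : ℕ) + n - 1) % n then (n : ℂ)
    else 0


/-!
With `S` the cyclic shift, `D1 = n (S⁻¹ - 1)` and `H1 = n² (2 - S - S⁻¹) = D1ᴴ D1`. Commuting `H1`
with the diagonal matrix `H2 = diag q` only produces finite differences of the samples
`q k = V (k / n)`: `[H1, H2]` is a combination of shifted `D1 v` and `v` with coefficients
`n Δq` and `n² Δ²q`, and `[H1, [H1, H2]]` a combination of shifted `H1 v`, `D1 v` and `v` with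
coefficients `nʲ Δʲq` for `j = 2, 3, 4`. Since `V` is periodic, the mean value theorem bounds every
`|nʲ Δʲq|` by `sup |V⁽ʲ⁾|` over one period, independently of `n`. The remaining `D1 v` term of the
second commutator is absorbed by `‖D1 v‖² = ⟪v, H1 v⟫ ≤ ‖v‖ ‖H1 v‖`.
-/

open Function Set
open scoped fwdDiff

theorem Function.Periodic.fwdDiff {f : ℝ → ℝ} {c : ℝ} (hf : Periodic f c) (h : ℝ) :
    Periodic (Δ_[h] f) c :=
  fun x => by simp only [_root_.fwdDiff, add_right_comm x c h, hf (x + h), hf x]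

theorem Function.Periodic.iteratedDeriv {f : ℝ → ℝ} {c : ℝ} (hf : Periodic f c) (j : ℕ) :
    Periodic (iteratedDeriv j f) c := fun x => by
  have hshift : (fun y => f (y + c)) = f := funext hf
  rw [← congrFun (iteratedDeriv_comp_add_const (n := j) (f := f) (s := c)) x, hshift]

theorem Function.Periodic.abs_le_of_forall_mem_Icc {f : ℝ → ℝ} {c M : ℝ} (hf : Periodic f c)
    (hc : 0 < c) (hM : ∀ x ∈ Icc 0 c, |f x| ≤ M) (x : ℝ) : |f x| ≤ M := by
  obtain ⟨y, hy, hxy⟩ := hf.exists_mem_Ico₀ hc x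
  rw [hxy]
  exact hM y (Ico_subset_Icc_self hy)

theorem abs_fwdDiff_le {f : ℝ → ℝ} {M h : ℝ} (hf : Differentiable ℝ f)
    (hM : ∀ x, |deriv f x| ≤ M) (hh : 0 ≤ h) (x : ℝ) : |Δ_[h] f x| ≤ M * h := by
  simpa [_root_.fwdDiff, abs_of_nonneg hh] using
    Convex.norm_image_sub_le_of_norm_deriv_le (fun y _ => hf y) (fun y _ => hM y)
      convex_univ (mem_univ x) (mem_univ (x + h))

theorem iteratedDeriv_fwdDiff {f : ℝ → ℝ} {j : ℕ} (hf : ContDiff ℝ j f) (h : ℝ) :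
    iteratedDeriv j (Δ_[h] f) = Δ_[h] (iteratedDeriv j f) := by
  funext x
  have hshift : ContDiff ℝ j (fun y => f (y + h)) := hf.comp (contDiff_id.add contDiff_const)
  change iteratedDeriv j ((fun y => f (y + h)) - f) x = _
  rw [iteratedDeriv_sub hshift.contDiffAt hf.contDiffAt, iteratedDeriv_comp_add_const]
  rfl

theorem abs_fwdDiff_iter_le {j : ℕ} {f : ℝ → ℝ} {M h : ℝ} (hf : ContDiff ℝ j f)
    (hM : ∀ x, |iteratedDeriv j f x| ≤ M) (hh : 0 ≤ h) (x : ℝ) :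
    |(Δ_[h])^[j] f x| ≤ M * h ^ j := by
  induction j generalizing f M with
  | zero => simpa using hM x
  | succ j ih =>
    have hfj : ContDiff ℝ j f := hf.of_le (by exact_mod_cast j.le_succ)
    have hderiv : ∀ y, |iteratedDeriv j (Δ_[h] f) y| ≤ M * h := by
      rw [iteratedDeriv_fwdDiff hfj]
      refine abs_fwdDiff_le (hf.differentiable_iteratedDeriv j (by exact_mod_cast j.lt_succ_self))
        (fun y => ?_) hh
      rw [← iteratedDeriv_succ]
      exact hM y
    rw [iterate_succ_apply, pow_succ', ← mul_assoc]
    exact ih (ContDiff.sub (hfj.comp (contDiff_id.add contDiff_const)) hfj) hderiv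

theorem Function.Periodic.apply_div_eq_of_modEq {n : ℕ} {g : ℝ → ℝ} (hg : Periodic g 1)
    {a b : ℕ} (hab : a ≡ b [MOD n]) : g (a / n) = g (b / n) := by
  have hmod : ∀ c : ℕ, g (c / n) = g ((c % n : ℕ) / n) := fun c => by
    rcases eq_or_ne n 0 with rfl | hn
    · simp
    have hc : (c : ℝ) / n = (c % n : ℕ) / n + (c / n : ℕ) := by
      conv_lhs => rw [← Nat.mod_add_div c n]
      push_cast
      field_simp
    rw [hc, ← mul_one ((c / n : ℕ) : ℝ), hg.nat_mul _ _]
  rw [hmod a, hmod b, hab]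

theorem matComm_mulVec {n : ℕ} (A B : Mat n) (v : Fin n → ℂ) :
    matComm A B *ᵥ v = A *ᵥ (B *ᵥ v) - B *ᵥ (A *ᵥ v) := by
  simp [matComm, sub_mulVec, mulVec_mulVec]

section GridFunction

variable {n : ℕ}

def gridSample (n : ℕ) (g : ℝ → ℝ) (k : Fin n) : ℂ := (g ((k : ℕ) / n) : ℂ)

theorem fdH2_eq_diagonal_gridSample (V : ℝ → ℝ) : fdH2 n V = diagonal (gridSample n V) := rfl

variable [NeZero n]

def diffQuotient (j : ℕ) (q : Fin n → ℂ) (k : Fin n) : ℂ := (n : ℂ) ^ j * (Δ_[1])^[j] q k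

theorem fwdDiff_gridSample {g : ℝ → ℝ} (hg : Periodic g 1) :
    Δ_[1] (gridSample n g) = gridSample n (Δ_[(n : ℝ)⁻¹] g) := by
  funext k
  have hk : ((k + 1 : Fin n) : ℕ) ≡ (k : ℕ) + 1 [MOD n] := by
    simp [Nat.ModEq, Fin.val_add, Nat.add_mod]
  simp only [_root_.fwdDiff, gridSample, hg.apply_div_eq_of_modEq hk]
  push_cast
  rw [add_div, div_eq_mul_inv 1, one_mul]

theorem fwdDiff_iter_gridSample {g : ℝ → ℝ} (hg : Periodic g 1) (j : ℕ) :
    (Δ_[1])^[j] (gridSample n g) = gridSample n ((Δ_[(n : ℝ)⁻¹])^[j] g) := by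
  induction j generalizing g with
  | zero => rfl
  | succ j ih => rw [iterate_succ_apply, iterate_succ_apply, fwdDiff_gridSample hg,
      ih (hg.fwdDiff _)]

theorem norm_diffQuotient_gridSample_le {g : ℝ → ℝ} {j : ℕ} {B : ℝ} (hg : Periodic g 1)
    (hgj : ContDiff ℝ j g) (hB : ∀ x ∈ Icc (0 : ℝ) 1, |iteratedDeriv j g x| ≤ B) (k : Fin n) :
    ‖diffQuotient j (gridSample n g) k‖ ≤ B := by
  have hn : (0 : ℝ) < n := Nat.cast_pos.mpr (Nat.pos_of_neZero n)
  have hdiff := abs_fwdDiff_iter_le hgj ((hg.iteratedDeriv j).abs_le_of_forall_mem_Icc one_pos hB)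
    (inv_nonneg.mpr hn.le) ((k : ℕ) / n)
  rw [diffQuotient, fwdDiff_iter_gridSample hg, gridSample, norm_mul, norm_pow,
    Complex.norm_natCast, Complex.norm_real, Real.norm_eq_abs]
  calc (n : ℝ) ^ j * |_| ≤ n ^ j * (B * (n : ℝ)⁻¹ ^ j) := by gcongr
    _ = B := by rw [inv_pow, mul_left_comm, mul_inv_cancel₀ (by positivity), mul_one]

end GridFunction

section ShiftMatrix

variable {n : ℕ} [NeZero n]

def shiftMatrix (s : Fin n) : Mat n := (Equiv.addRight s).toPEquiv.toMatrix

theorem shiftMatrix_apply (s k l : Fin n) : shiftMatrix s k l = if l = k + s then 1 else 0 := by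
  simp [shiftMatrix, PEquiv.toMatrix_apply, eq_comm]

theorem shiftMatrix_mulVec (s : Fin n) (v : Fin n → ℂ) :
    shiftMatrix s *ᵥ v = fun k => v (k + s) :=
  PEquiv.toMatrix_toPEquiv_mulVec _ v

theorem shiftMatrix_zero : shiftMatrix (0 : Fin n) = 1 := by
  ext k l
  simp [shiftMatrix_apply, one_apply, eq_comm]

theorem shiftMatrix_mul (s t : Fin n) : shiftMatrix s * shiftMatrix t = shiftMatrix (s + t) := by
  rw [shiftMatrix, shiftMatrix, ← PEquiv.toMatrix_trans, ← Equiv.toPEquiv_trans]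
  congr 2
  ext k
  simp [add_assoc]

theorem conjTranspose_shiftMatrix (s : Fin n) : (shiftMatrix s)ᴴ = shiftMatrix (-s) := by
  ext k l
  simp [shiftMatrix_apply, apply_ite star, eq_add_neg_iff_add_eq, eq_comm]

theorem Fin.val_add_one_eq_mod (k : Fin n) : ((k + 1 : Fin n) : ℕ) = ((k : ℕ) + 1) % n := by
  simp [Fin.val_add, Nat.add_mod]

theorem Fin.val_add_neg_one_eq_mod (hn : 2 ≤ n) (k : Fin n) :
    ((k + -1 : Fin n) : ℕ) = ((k : ℕ) + n - 1) % n := by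
  rw [← sub_eq_add_neg, Fin.val_sub, Fin.val_one', Nat.mod_eq_of_lt (by omega : 1 < n)]
  congr 1
  omega

theorem Fin.one_ne_zero_of_two_le (hn : 2 ≤ n) : (1 : Fin n) ≠ 0 := by
  rw [Ne, Fin.ext_iff, Fin.val_one', Fin.val_zero, Nat.mod_eq_of_lt (by omega)]
  exact one_ne_zero

theorem Fin.one_ne_neg_one_of_three_le (hn : 3 ≤ n) : (1 : Fin n) ≠ -1 := by
  intro h
  have hval := congrArg Fin.val h
  rw [Fin.val_neg, if_neg (Fin.one_ne_zero_of_two_le (by omega)), Fin.val_one',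
    Nat.mod_eq_of_lt (by omega)] at hval
  omega

theorem fdD1_eq_smul (hn : 2 ≤ n) : fdD1 n = (n : ℂ) • (shiftMatrix (-1) - 1) := by
  have h1 := Fin.one_ne_zero_of_two_le hn
  ext k l
  simp only [fdD1, of_apply, Matrix.smul_apply, Matrix.sub_apply, shiftMatrix_apply, one_apply,
    smul_eq_mul, ← Fin.val_add_neg_one_eq_mod hn, Fin.val_inj]
  by_cases hlk : l = k
  · subst hlk
    simp [h1]
  · simp [hlk, Ne.symm hlk]

theorem fdH1_eq_smul (hn : 3 ≤ n) :
    fdH1 n = (n : ℂ) ^ 2 • (2 - shiftMatrix 1 - shiftMatrix (-1)) := by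
  have h1 := Fin.one_ne_zero_of_two_le (n := n) (by omega)
  ext k l
  have hk1 : k + 1 ≠ k := by simpa using h1
  have hk2 : k + -1 ≠ k := by simpa using h1
  have hk3 : k + 1 ≠ k + -1 := by simpa using Fin.one_ne_neg_one_of_three_le hn
  simp only [fdH1, of_apply, Matrix.smul_apply, Matrix.sub_apply, shiftMatrix_apply, smul_eq_mul,
    ← Fin.val_add_neg_one_eq_mod (n := n) (by omega), ← Fin.val_add_one_eq_mod, Fin.val_inj,
    Matrix.ofNat_apply]
  by_cases hlk : l = k
  · subst hlk
    simp [hk1.symm, hk2.symm]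
    ring
  by_cases hl1 : l = k + 1
  · subst hl1
    simp [hk1, hk1.symm, hk3]
  by_cases hl2 : l = k + -1
  · subst hl2
    simp [hk2, hk2.symm, hk3.symm]
  simp [hlk, hl1, hl2, Ne.symm hlk]

theorem fdD1_mulVec (hn : 2 ≤ n) (v : Fin n → ℂ) :
    fdD1 n *ᵥ v = fun k => n * (v (k - 1) - v k) := by
  rw [fdD1_eq_smul hn, smul_mulVec, sub_mulVec, shiftMatrix_mulVec, one_mulVec]
  ext k
  simp [sub_eq_add_neg]

theorem fdH1_mulVec (hn : 3 ≤ n) (v : Fin n → ℂ) :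
    fdH1 n *ᵥ v = fun k => n ^ 2 * (2 * v k - v (k + 1) - v (k - 1)) := by
  rw [fdH1_eq_smul hn, smul_mulVec, sub_mulVec, sub_mulVec, shiftMatrix_mulVec,
    shiftMatrix_mulVec]
  ext k
  simp [sub_eq_add_neg]

theorem fdH1_eq_conjTranspose_mul (hn : 3 ≤ n) : fdH1 n = (fdD1 n)ᴴ * fdD1 n := by
  rw [fdH1_eq_smul hn, fdD1_eq_smul (by omega), conjTranspose_smul, conjTranspose_sub,
    conjTranspose_one, conjTranspose_shiftMatrix, neg_neg, smul_mul_smul_comm, star_natCast,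
    sub_mul, mul_sub, mul_sub, shiftMatrix_mul, add_neg_cancel, shiftMatrix_zero, mul_one,
    one_mul, mul_one, ← sq]
  congr 1
  rw [← one_add_one_eq_two]
  abel

end ShiftMatrix

section EuclideanNorm

variable {n : ℕ}

theorem evnorm_eq_sqrt (v : Fin n → ℂ) : evnorm v = √(∑ k, ‖v k‖ ^ 2) := by
  simp [evnorm, EuclideanSpace.norm_eq]

theorem evnorm_nonneg (v : Fin n → ℂ) : 0 ≤ evnorm v := norm_nonneg _

theorem evnorm_add_le_of_le {u v : Fin n → ℂ} {a b : ℝ} (hu : evnorm u ≤ a) (hv : evnorm v ≤ b) :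
    evnorm (u + v) ≤ a + b := by
  refine le_trans ?_ (add_le_add hu hv)
  simpa [evnorm] using norm_add_le (WithLp.toLp 2 u) (WithLp.toLp 2 v)

theorem evnorm_sub_le_of_le {u v : Fin n → ℂ} {a b : ℝ} (hu : evnorm u ≤ a) (hv : evnorm v ≤ b) :
    evnorm (u - v) ≤ a + b := by
  refine le_trans ?_ (add_le_add hu hv)
  simpa [evnorm] using norm_sub_le (WithLp.toLp 2 u) (WithLp.toLp 2 v)

theorem evnorm_mul_comp_le {c : Fin n → ℂ} {M : ℝ} (hM : 0 ≤ M) (hc : ∀ k, ‖c k‖ ≤ M)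
    (u : Fin n → ℂ) (σ : Equiv.Perm (Fin n)) :
    evnorm (fun k => c k * u (σ k)) ≤ M * evnorm u := by
  rw [evnorm_eq_sqrt, evnorm_eq_sqrt, ← Real.sqrt_sq hM, ← Real.sqrt_mul (sq_nonneg M)]
  refine Real.sqrt_le_sqrt ?_
  calc ∑ k, ‖c k * u (σ k)‖ ^ 2 ≤ ∑ k, M ^ 2 * ‖u (σ k)‖ ^ 2 :=
        Finset.sum_le_sum fun k _ => by rw [norm_mul, mul_pow]; gcongr; exact hc k
    _ = M ^ 2 * ∑ k, ‖u k‖ ^ 2 := by rw [← Finset.mul_sum, Equiv.sum_comp σ (fun k => ‖u k‖ ^ 2)]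

theorem evnorm_mulVec_le_of_conjTranspose_mul {m : ℕ} (A : Matrix (Fin m) (Fin n) ℂ)
    (v : Fin n → ℂ) : evnorm (A *ᵥ v) ≤ (evnorm ((Aᴴ * A) *ᵥ v) + evnorm v) / 2 := by
  have hinner : evnorm (A *ᵥ v) ^ 2 = RCLike.re (inner ℂ (WithLp.toLp 2 v)
      (WithLp.toLp 2 ((Aᴴ * A) *ᵥ v))) := by
    rw [evnorm, WithLp.equiv_symm_apply, ← inner_self_eq_norm_sq (𝕜 := ℂ),
      EuclideanSpace.inner_toLp_toLp, EuclideanSpace.inner_toLp_toLp, star_mulVec,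
      dotProduct_comm, ← dotProduct_mulVec, mulVec_mulVec, dotProduct_comm]
  have hsq : evnorm (A *ᵥ v) ^ 2 ≤ evnorm v * evnorm ((Aᴴ * A) *ᵥ v) :=
    hinner ▸ (RCLike.re_le_norm _).trans (norm_inner_le_norm _ _)
  nlinarith [sq_nonneg (evnorm v - evnorm ((Aᴴ * A) *ᵥ v)), evnorm_nonneg v,
    evnorm_nonneg ((Aᴴ * A) *ᵥ v), evnorm_nonneg (A *ᵥ v)]

end EuclideanNorm

section Commutator

variable {n : ℕ} [NeZero n]

theorem matComm_fdH1_diagonal_mulVec (hn : 3 ≤ n) (q v : Fin n → ℂ) :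
    matComm (fdH1 n) (diagonal q) *ᵥ v =
      (fun k => diffQuotient 1 q k * (fdD1 n *ᵥ v) (k + 1)) +
      (fun k => diffQuotient 1 q (k - 1) * (fdD1 n *ᵥ v) k) -
      (fun k => diffQuotient 2 q (k - 1) * v k) := by
  ext k
  simp only [matComm_mulVec, fdH1_mulVec hn, fdD1_mulVec (n := n) (by omega), mulVec_diagonal,
    diffQuotient, Pi.add_apply, Pi.sub_apply, iterate_succ_apply', iterate_zero_apply,
    _root_.fwdDiff, sub_add_cancel, add_sub_cancel_right]
  ring

theorem matComm_fdH1_matComm_fdH1_diagonal_mulVec (hn : 3 ≤ n) (q v : Fin n → ℂ) :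
    matComm (fdH1 n) (matComm (fdH1 n) (diagonal q)) *ᵥ v =
      (fun k => diffQuotient 4 q (k - 1 - 1) * v k) -
      (fun k => diffQuotient 2 q k * (fdH1 n *ᵥ v) (k + 1)) -
      (fun k => diffQuotient 2 q (k - 1 - 1) * (fdH1 n *ᵥ v) (k - 1)) -
      (fun k => 2 * diffQuotient 2 q k * (fdH1 n *ᵥ v) k) -
      (fun k => 2 * (diffQuotient 3 q (k - 1) + diffQuotient 3 q (k - 1 - 1)) *
        (fdD1 n *ᵥ v) k) := by
  ext k
  simp only [matComm_mulVec, fdH1_mulVec hn, fdD1_mulVec (n := n) (by omega), mulVec_diagonal,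
    diffQuotient, Pi.sub_apply, iterate_succ_apply', iterate_zero_apply, _root_.fwdDiff,
    sub_add_cancel, add_sub_cancel_right]
  ring

theorem evnorm_matComm_fdH1_diagonal_mulVec_le (hn : 3 ≤ n) {q : Fin n → ℂ} {B : ℝ} (hB : 0 ≤ B)
    (hq1 : ∀ k, ‖diffQuotient 1 q k‖ ≤ B) (hq2 : ∀ k, ‖diffQuotient 2 q k‖ ≤ B)
    (v : Fin n → ℂ) :
    evnorm (matComm (fdH1 n) (diagonal q) *ᵥ v) ≤ 2 * B * evnorm (fdD1 n *ᵥ v) + B * evnorm v := by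
  rw [matComm_fdH1_diagonal_mulVec hn]
  refine (evnorm_sub_le_of_le (evnorm_add_le_of_le
    (evnorm_mul_comp_le hB hq1 (fdD1 n *ᵥ v) (Equiv.addRight 1))
    (evnorm_mul_comp_le hB (fun k => hq1 (k - 1)) (fdD1 n *ᵥ v) (Equiv.refl _)))
    (evnorm_mul_comp_le hB (fun k => hq2 (k - 1)) v (Equiv.refl _))).trans_eq ?_
  ring

theorem evnorm_matComm_fdH1_matComm_fdH1_diagonal_mulVec_le (hn : 3 ≤ n) {q : Fin n → ℂ} {B : ℝ}
    (hB : 0 ≤ B) (hq2 : ∀ k, ‖diffQuotient 2 q k‖ ≤ B) (hq3 : ∀ k, ‖diffQuotient 3 q k‖ ≤ B)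
    (hq4 : ∀ k, ‖diffQuotient 4 q k‖ ≤ B) (v : Fin n → ℂ) :
    evnorm (matComm (fdH1 n) (matComm (fdH1 n) (diagonal q)) *ᵥ v) ≤
      6 * B * evnorm (fdH1 n *ᵥ v) + 3 * B * evnorm v := by
  have h2 : ∀ k, ‖2 * diffQuotient 2 q k‖ ≤ 2 * B := fun k => by
    rw [norm_mul, Complex.norm_two]
    linarith [hq2 k]
  have h3 : ∀ k, ‖2 * (diffQuotient 3 q (k - 1) + diffQuotient 3 q (k - 1 - 1))‖ ≤ 4 * B :=
    fun k => by
      rw [norm_mul, Complex.norm_two]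
      linarith [norm_add_le (diffQuotient 3 q (k - 1)) (diffQuotient 3 q (k - 1 - 1)),
        hq3 (k - 1), hq3 (k - 1 - 1)]
  have hD := evnorm_mulVec_le_of_conjTranspose_mul (fdD1 n) v
  rw [← fdH1_eq_conjTranspose_mul hn] at hD
  rw [matComm_fdH1_matComm_fdH1_diagonal_mulVec hn]
  refine (evnorm_sub_le_of_le (evnorm_sub_le_of_le (evnorm_sub_le_of_le (evnorm_sub_le_of_le
    (evnorm_mul_comp_le hB (fun k => hq4 (k - 1 - 1)) v (Equiv.refl _))
    (evnorm_mul_comp_le hB hq2 (fdH1 n *ᵥ v) (Equiv.addRight 1)))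
    (evnorm_mul_comp_le hB (fun k => hq2 (k - 1 - 1)) (fdH1 n *ᵥ v) (Equiv.subRight 1)))
    (evnorm_mul_comp_le (by positivity) h2 (fdH1 n *ᵥ v) (Equiv.refl _)))
    (evnorm_mul_comp_le (by positivity) h3 (fdD1 n *ᵥ v) (Equiv.refl _))).trans ?_
  nlinarith

end Commutator


/-- **Verification of the commutator assumption for the periodic finite-difference
discretization.** There are constants `C1, C2 > 0` depending only on a bound `B` for the
suprema over `[0,1]` of `|V'|, |V''|, |V'''|, |V''''|` (in particular independent of `n`)
such that for all `n ≥ 3` and `v ∈ ℂⁿ` the commutator bounds hold; moreover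
`H1 = D1† D1`, so `H1` is positive semidefinite. -/
theorem finite_difference_commutator_assumption (B : ℝ) (hB : 0 ≤ B) :
    ∃ C1 : ℝ, 0 < C1 ∧ ∃ C2 : ℝ, 0 < C2 ∧
      ∀ (V : ℝ → ℝ), Function.Periodic V 1 → ContDiff ℝ 4 V →
        (∀ j ∈ Finset.Icc 1 4, ∀ x ∈ Set.Icc (0:ℝ) 1, |iteratedDeriv j V x| ≤ B) →
        ∀ (n : ℕ), 3 ≤ n →
          fdH1 n = (fdD1 n)ᴴ * fdD1 n ∧
          ∀ v : Fin n → ℂ,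
            evnorm ((matComm (fdH1 n) (fdH2 n V)).mulVec v) ≤
              C1 * (evnorm ((fdD1 n).mulVec v) + evnorm v) ∧
            evnorm ((matComm (fdH1 n) (matComm (fdH1 n) (fdH2 n V))).mulVec v) ≤
              C2 * (evnorm ((fdH1 n).mulVec v) + evnorm v) := by
  refine ⟨2 * B + 1, by linarith, 6 * B + 1, by linarith, fun V hper hV hbd n hn => ?_⟩
  have : NeZero n := ⟨by omega⟩
  have hq : ∀ j ∈ Finset.Icc 1 4, ∀ k, ‖diffQuotient j (gridSample n V) k‖ ≤ B := fun j hj =>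
    norm_diffQuotient_gridSample_le hper (hV.of_le (by exact_mod_cast (Finset.mem_Icc.mp hj).2))
      (hbd j hj)
  refine ⟨fdH1_eq_conjTranspose_mul hn, fun v => ⟨?_, ?_⟩⟩
  · rw [fdH2_eq_diagonal_gridSample]
    refine (evnorm_matComm_fdH1_diagonal_mulVec_le hn hB (hq 1 (by decide)) (hq 2 (by decide))
      v).trans ?_
    nlinarith [evnorm_nonneg v, evnorm_nonneg (fdD1 n *ᵥ v)]
  · rw [fdH2_eq_diagonal_gridSample]
    refine (evnorm_matComm_fdH1_matComm_fdH1_diagonal_mulVec_le hn hB (hq 2 (by decide))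
      (hq 3 (by decide)) (hq 4 (by decide)) v).trans ?_
    nlinarith [evnorm_nonneg v, evnorm_nonneg (fdH1 n *ᵥ v)]
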